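/- arXiv:1605.02552 — 6 statements merged into one kernel-verified Lean document; each statement's English description precedes it below -/
import Mathlib

section
/- Define f(ξ,x) = log(1+ξx²) for x ≥ √(ζ/ξ) and f(ξ,x) = (2√(ξζ)/(1+ζ))·x for 0 ≤ x < √(ζ/ξ), where ζ = -1 + e^{2+W₀(-2e^{-2})} (W₀ the principal Lambert W branch) and ξ > 0. Then f(ξ,·) is concave on [0,∞) and satisfies f(ξ,x) ≥ log(1+ξx²) for all x ≥ 0. -/
/-!
The constant ζ is the positive root of `log (1 + ζ) = 2ζ / (1 + ζ)`: with `1 + ζ = e^{2+w}` and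
`w e^w = -2e^{-2}` one gets `w (1 + ζ) = -2`. Equivalently, at `x₀ = √(ζ/ξ)` the tangent to
`g x = log (1 + ξ x²)` passes through the origin, so `f` is `g` on `[x₀, ∞)` extended to the left
by its tangent line at `x₀`. Since `ξ x₀² = ζ ≥ 1`, `g'` is antitone on `[x₀, ∞)`, so the extension
has an antitone derivative and is concave. Below `x₀`, the difference between the line and `g`
increases and then decreases, and it vanishes at `0` and at `x₀`.
-/

open Real Set Filter

noncomputable def tangentExtension (g : ℝ → ℝ) (x₀ x : ℝ) : ℝ :=
  if x₀ ≤ x then g x else g x₀ + deriv g x₀ * (x - x₀)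

section TangentExtension

variable {g : ℝ → ℝ} {x₀ : ℝ}

lemma hasDerivAt_tangentExtension (hg : ∀ x ∈ Ici x₀, DifferentiableAt ℝ g x) (x : ℝ) :
    HasDerivAt (tangentExtension g x₀) (deriv g (max x₀ x)) x := by
  have hline : ∀ y, HasDerivAt (fun t => g x₀ + deriv g x₀ * (t - x₀)) (deriv g x₀) y := fun y =>
    (((hasDerivAt_id y).sub_const x₀).const_mul (deriv g x₀)).const_add (g x₀) |>.congr_deriv
      (mul_one _)
  have hleft : EqOn (tangentExtension g x₀) (fun t => g x₀ + deriv g x₀ * (t - x₀)) (Iic x₀) :=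
    fun t ht => by
      rcases (mem_Iic.1 ht).lt_or_eq with ht | rfl
      · simp [tangentExtension, not_le.2 ht]
      · simp [tangentExtension]
  have hright : EqOn (tangentExtension g x₀) g (Ici x₀) := fun t ht => if_pos ht
  rcases lt_trichotomy x x₀ with hx | rfl | hx
  · rw [max_eq_left hx.le]
    exact (hline x).congr_of_eventuallyEq
      (eventuallyEq_of_mem (Iic_mem_nhds hx) hleft)
  · rw [max_self]
    have hl := (hline x).hasDerivWithinAt.congr hleft (hleft self_mem_Iic)
    have hr := (hg x self_mem_Ici).hasDerivAt.hasDerivWithinAt.congr hright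
      (hright self_mem_Ici)
    simpa only [Iic_union_Ici, hasDerivWithinAt_univ] using hl.union hr
  · rw [max_eq_right hx.le]
    exact (hg x hx.le).hasDerivAt.congr_of_eventuallyEq
      (eventuallyEq_of_mem (Ioi_mem_nhds hx) fun t ht => hright (mem_Ici.2 (le_of_lt ht)))

lemma concaveOn_tangentExtension (hg : ∀ x ∈ Ici x₀, DifferentiableAt ℝ g x)
    (hanti : AntitoneOn (deriv g) (Ici x₀)) : ConcaveOn ℝ univ (tangentExtension g x₀) := by
  have hderiv : deriv (tangentExtension g x₀) = fun x => deriv g (max x₀ x) :=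
    funext fun x => (hasDerivAt_tangentExtension hg x).deriv
  refine Antitone.concaveOn_univ_of_deriv
    (fun x => (hasDerivAt_tangentExtension hg x).differentiableAt) ?_
  intro p q hpq
  rw [hderiv]
  exact hanti (mem_Ici.2 (le_max_left _ _)) (mem_Ici.2 (le_max_left _ _)) (max_le_max_left _ hpq)

end TangentExtension

lemma nonneg_of_monotoneOn_of_antitoneOn {φ : ℝ → ℝ} {a m b : ℝ}
    (hmono : MonotoneOn φ (Icc a m)) (hanti : AntitoneOn φ (Icc m b))
    (ha : 0 ≤ φ a) (hb : 0 ≤ φ b) {x : ℝ} (hx : x ∈ Icc a b) : 0 ≤ φ x := by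
  rcases le_total x m with hxm | hmx
  · exact ha.trans (hmono ⟨le_rfl, hx.1.trans hxm⟩ ⟨hx.1, hxm⟩ hx.1)
  · exact hb.trans (hanti ⟨hmx, hx.2⟩ ⟨hmx.trans hx.2, le_rfl⟩ hx.2)

section LogOneAddMulSq

variable {ξ : ℝ}

lemma hasDerivAt_log_one_add_mul_sq (hξ : 0 ≤ ξ) (x : ℝ) :
    HasDerivAt (fun y => log (1 + ξ * y ^ 2)) (2 * ξ * x / (1 + ξ * x ^ 2)) x := by
  have h : HasDerivAt (fun y => 1 + ξ * y ^ 2) (2 * ξ * x) x :=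
    ((hasDerivAt_pow 2 x).const_mul ξ).const_add 1 |>.congr_deriv (by ring)
  exact h.log (by positivity)

lemma deriv_log_one_add_mul_sq (hξ : 0 ≤ ξ) :
    deriv (fun y => log (1 + ξ * y ^ 2)) = fun x => 2 * ξ * x / (1 + ξ * x ^ 2) :=
  funext fun x => (hasDerivAt_log_one_add_mul_sq hξ x).deriv

lemma antitoneOn_mul_div_one_add_mul_sq {x₀ : ℝ} (hξ : 0 ≤ ξ) (hx₀ : 0 ≤ x₀)
    (hinfl : 1 ≤ ξ * x₀ ^ 2) :
    AntitoneOn (fun x => 2 * ξ * x / (1 + ξ * x ^ 2)) (Ici x₀) := by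
  intro p hp q _ hpq
  have hp : x₀ ≤ p := hp
  have hpq1 : 1 ≤ ξ * (p * q) :=
    hinfl.trans (mul_le_mul_of_nonneg_left (by nlinarith) hξ)
  simp only
  rw [div_le_div_iff₀ (by positivity) (by positivity)]
  nlinarith [mul_nonneg (mul_nonneg hξ (sub_nonneg.2 hpq)) (sub_nonneg.2 hpq1)]

lemma log_one_add_mul_sq_le_of_tangent {x₀ : ℝ} (hξ : 0 < ξ) (hx₀ : 0 < x₀)
    (hinfl : 1 ≤ ξ * x₀ ^ 2)
    (htan : log (1 + ξ * x₀ ^ 2) = 2 * ξ * x₀ / (1 + ξ * x₀ ^ 2) * x₀)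
    {x : ℝ} (hx : x ∈ Icc 0 x₀) :
    log (1 + ξ * x ^ 2) ≤ 2 * ξ * x₀ / (1 + ξ * x₀ ^ 2) * x := by
  set c := 2 * ξ * x₀ / (1 + ξ * x₀ ^ 2)
  set r := 1 / (ξ * x₀)
  let φ : ℝ → ℝ := fun t => c * t - log (1 + ξ * t ^ 2)
  have hφ : ∀ t, HasDerivAt φ (c - 2 * ξ * t / (1 + ξ * t ^ 2)) t := fun t =>
    ((hasDerivAt_id t).const_mul c |>.congr_deriv (mul_one c)).sub
      (hasDerivAt_log_one_add_mul_sq hξ.le t)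
  have hdiff : Differentiable ℝ φ := fun t => (hφ t).differentiableAt
  -- the numerator of `φ'` is a quadratic with roots `r` and `x₀`
  have hderiv : ∀ t, deriv φ t = c * ξ * ((t - r) * (t - x₀)) / (1 + ξ * t ^ 2) := by
    intro t
    rw [(hφ t).deriv]
    simp only [c, r]
    field_simp
    ring
  have hcξ : 0 < c * ξ := by positivity
  have hr : r ≤ x₀ := by
    rw [div_le_iff₀ (by positivity)]
    nlinarith
  have hmono : MonotoneOn φ (Icc 0 r) := by
    refine monotoneOn_of_deriv_nonneg (convex_Icc 0 r) hdiff.continuous.continuousOn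
      hdiff.differentiableOn fun t ht => ?_
    rw [interior_Icc] at ht
    rw [hderiv]
    exact div_nonneg (mul_nonneg hcξ.le (mul_nonneg_of_nonpos_of_nonpos (by linarith [ht.2])
      (by linarith [ht.2]))) (by positivity)
  have hanti : AntitoneOn φ (Icc r x₀) := by
    refine antitoneOn_of_deriv_nonpos (convex_Icc r x₀) hdiff.continuous.continuousOn
      hdiff.differentiableOn fun t ht => ?_
    rw [interior_Icc] at ht
    rw [hderiv]
    exact div_nonpos_of_nonpos_of_nonneg (mul_nonpos_of_nonneg_of_nonpos hcξ.le
      (mul_nonpos_of_nonneg_of_nonpos (by linarith [ht.1]) (by linarith [ht.2])))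
      (by positivity)
  have h0 : 0 ≤ φ 0 := by simp [φ]
  have hx₀' : 0 ≤ φ x₀ := by simp only [φ, htan, sub_self, le_refl]
  exact sub_nonneg.1 (nonneg_of_monotoneOn_of_antitoneOn hmono hanti h0 hx₀' hx)

end LogOneAddMulSq

lemma one_le_and_log_one_add_eq_of_mul_exp_eq {w ζ : ℝ} (hw : w * exp w = -2 * exp (-2))
    (hw' : -1 ≤ w) (hζ : ζ = -1 + exp (2 + w)) :
    1 ≤ ζ ∧ log (1 + ζ) = 2 * ζ / (1 + ζ) := by
  have h1ζ : 1 + ζ = exp (2 + w) := by rw [hζ]; ring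
  have hwζ : w * (1 + ζ) = -2 := by
    rw [h1ζ, add_comm, exp_add, ← mul_assoc, hw, mul_assoc, ← exp_add]
    norm_num
  refine ⟨?_, ?_⟩
  · linarith [add_one_le_exp (2 + w)]
  · rw [h1ζ, log_exp, eq_div_iff (exp_pos _).ne', ← h1ζ]
    linear_combination hwζ

/-- With ζ = -1 + e^{2+W₀(-2e^{-2})} (W₀ the principal Lambert W branch,
characterized by w·eʷ = -2e^{-2} and w ≥ -1) and ξ > 0, the function
f(ξ,x) = log(1+ξx²) for x ≥ √(ζ/ξ), f(ξ,x) = (2√(ξζ)/(1+ζ))·x for 0 ≤ x < √(ζ/ξ),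
is concave on [0,∞) and satisfies f(ξ,x) ≥ log(1+ξx²) for all x ≥ 0. -/
theorem stmt0 (ξ w ζ : ℝ) (hξ : 0 < ξ)
    (hw : w * Real.exp w = -2 * Real.exp (-2)) (hw' : -1 ≤ w)
    (hζ : ζ = -1 + Real.exp (2 + w))
    (f : ℝ → ℝ)
    (hf : ∀ x : ℝ, f x =
      if Real.sqrt (ζ / ξ) ≤ x then Real.log (1 + ξ * x ^ 2)
      else (2 * Real.sqrt (ξ * ζ) / (1 + ζ)) * x) :
    ConcaveOn ℝ (Set.Ici (0 : ℝ)) f ∧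
      ∀ x : ℝ, 0 ≤ x → Real.log (1 + ξ * x ^ 2) ≤ f x := by
  obtain ⟨hζ1, hlogζ⟩ := one_le_and_log_one_add_eq_of_mul_exp_eq hw hw' hζ
  set x₀ := √(ζ / ξ)
  have hx₀ : 0 < x₀ := sqrt_pos.2 (by positivity)
  have hsq : ξ * x₀ ^ 2 = ζ := by
    rw [sq_sqrt (by positivity)]
    field_simp
  have hslope : 2 * √(ξ * ζ) / (1 + ζ) = 2 * ξ * x₀ / (1 + ξ * x₀ ^ 2) := by
    rw [hsq, show ξ * ζ = (ξ * x₀) ^ 2 by rw [← hsq]; ring, sqrt_sq (by positivity), mul_assoc]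
  have htan : log (1 + ξ * x₀ ^ 2) = 2 * ξ * x₀ / (1 + ξ * x₀ ^ 2) * x₀ := by
    rw [hsq, hlogζ, div_mul_eq_mul_div]
    congr 1
    linear_combination (-2) * hsq
  have hinfl : 1 ≤ ξ * x₀ ^ 2 := hsq ▸ hζ1
  have hf_eq : f = tangentExtension (fun y => log (1 + ξ * y ^ 2)) x₀ := by
    funext x
    rw [hf, tangentExtension, deriv_log_one_add_mul_sq hξ.le, hslope]
    split_ifs
    · rfl
    · rw [htan]
      ring
  refine ⟨?_, fun x hx => ?_⟩
  · rw [hf_eq]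
    refine (concaveOn_tangentExtension
      (fun x _ => (hasDerivAt_log_one_add_mul_sq hξ.le x).differentiableAt) ?_).subset
      (subset_univ _) (convex_Ici 0)
    rw [deriv_log_one_add_mul_sq hξ.le]
    exact antitoneOn_mul_div_one_add_mul_sq hξ.le hx₀.le hinfl
  · rw [hf]
    split_ifs with h
    · exact le_rfl
    · rw [hslope]
      exact log_one_add_mul_sq_le_of_tangent hξ hx₀ hinfl htan ⟨hx, (not_le.1 h).le⟩
end

section
/- Suppose nodes are placed in the plane with pairwise distances at least r_min > 0, and consider channel gains g(r) = G·r^{-α} with α > 2, G > 0. Then for any fixed node n, the sum over all other nodes n' of G·d(n,n')^{-α} is bounded above by a constant depending only on r_min, G, and α (uniformly in the number of nodes). -/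
/-!
Rather than counting nodes in annuli, compare the sum with an integral. The balls of radius
`r / 2` around the nodes are pairwise disjoint, and on the ball around `p` the kernel
`(1 + dist x n) ^ (-α)` is at least a fixed multiple of `dist n p ^ (-α)`. Hence the sum, times
the volume of one such ball, is at most a multiple of the total integral of the kernel, which is
finite as soon as `α` exceeds the dimension.
-/

open MeasureTheory Metric Real

theorem rpow_neg_dist_le_mul_one_add_dist {X : Type*} [PseudoMetricSpace X] {r α : ℝ}
    (hr : 0 < r) (hα : 0 ≤ α) {n p x : X} (hnp : r ≤ dist n p) (hx : x ∈ ball p (r / 2)) :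
    dist n p ^ (-α) ≤ (1 / r + 3 / 2) ^ α * (1 + dist x n) ^ (-α) := by
  set c := 1 / r + 3 / 2
  have hc : 0 < c := by positivity
  have hd : 0 < dist n p := hr.trans_le hnp
  have hnear : 1 + dist x n ≤ c * dist n p := by
    have h1 : 1 ≤ dist n p / r := (one_le_div hr).mpr hnp
    have h2 : dist x n ≤ dist x p + dist n p := by
      simpa [dist_comm p n] using dist_triangle x p n
    have h3 : dist x p < r / 2 := mem_ball.mp hx
    have : c * dist n p = dist n p / r + 3 / 2 * dist n p := by
      simp only [c]; field_simp
    nlinarith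
  calc dist n p ^ (-α) = c ^ α * (c * dist n p) ^ (-α) := by
        rw [mul_rpow hc.le hd.le, rpow_neg hc.le, ← mul_assoc,
          mul_inv_cancel₀ (rpow_pos_of_pos hc α).ne', one_mul]
    _ ≤ c ^ α * (1 + dist x n) ^ (-α) := by
        have := rpow_le_rpow_of_nonpos (by positivity) hnear (neg_nonpos.mpr hα)
        gcongr

section

variable {E : Type*} [NormedAddCommGroup E] [NormedSpace ℝ E] [FiniteDimensional ℝ E]

section

variable [MeasurableSpace E] [BorelSpace E] (μ : Measure E) [μ.IsAddHaarMeasure]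

theorem sum_mul_measureReal_ball_le_integral {f : E → ℝ} (hf : Integrable f μ) (hf0 : 0 ≤ f)
    {S : Finset E} {ε : ℝ} (hS : (S : Set E).PairwiseDisjoint fun p => ball p ε)
    (a : E → ℝ) (ha : ∀ p ∈ S, ∀ x ∈ ball p ε, a p ≤ f x) :
    (∑ p ∈ S, a p) * μ.real (ball 0 ε) ≤ ∫ x, f x ∂μ :=
  calc (∑ p ∈ S, a p) * μ.real (ball 0 ε)
      = ∑ p ∈ S, a p * μ.real (ball p ε) := by
        simp only [Finset.sum_mul, Measure.real, Measure.addHaar_ball_center]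
    _ ≤ ∑ p ∈ S, ∫ x in ball p ε, f x ∂μ := Finset.sum_le_sum fun p hp =>
        setIntegral_ge_of_const_le_real measurableSet_ball measure_ball_lt_top.ne (ha p hp)
          hf.integrableOn
    _ = ∫ x in ⋃ p ∈ S, ball p ε, f x ∂μ :=
        (integral_biUnion_finset S (fun _ _ => measurableSet_ball) hS
          fun _ _ => hf.integrableOn).symm
    _ ≤ ∫ x, f x ∂μ := setIntegral_le_integral hf (Filter.Eventually.of_forall hf0)

theorem sum_rpow_neg_dist_mul_measureReal_ball_le {r α : ℝ} (hr : 0 < r)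
    (hα : Module.finrank ℝ E < α) {S : Finset E}
    (hS : (S : Set E).Pairwise fun p q => r ≤ dist p q) {n : E} (hn : ∀ p ∈ S, r ≤ dist n p) :
    (∑ p ∈ S, dist n p ^ (-α)) * μ.real (ball 0 (r / 2)) ≤
      (1 / r + 3 / 2) ^ α * ∫ x, (1 + ‖x‖) ^ (-α) ∂μ := by
  have hkernel : Integrable (fun x => (1 + dist x n) ^ (-α)) μ := by
    simpa only [dist_eq_norm] using (integrable_one_add_norm hα).comp_sub_right n
  have hdisj : (S : Set E).PairwiseDisjoint fun p => ball p (r / 2) := fun p hp q hq hpq =>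
    ball_disjoint_ball (by linarith [hS hp hq hpq])
  have hbound := sum_mul_measureReal_ball_le_integral μ (hkernel.const_mul ((1 / r + 3 / 2) ^ α))
    (fun x => by positivity) hdisj _ fun p hp x hx =>
      rpow_neg_dist_le_mul_one_add_dist hr ((Nat.cast_nonneg _).trans hα.le) (hn p hp) hx
  have hshift : ∫ x, (1 + dist x n) ^ (-α) ∂μ = ∫ x, (1 + ‖x‖) ^ (-α) ∂μ := by
    simpa only [dist_eq_norm] using integral_sub_right_eq_self (fun x => (1 + ‖x‖) ^ (-α)) n
  rwa [integral_const_mul, hshift] at hbound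

end

theorem exists_sum_rpow_neg_dist_le [DecidableEq E] {r α : ℝ} (hr : 0 < r)
    (hα : Module.finrank ℝ E < α) :
    ∃ C : ℝ, ∀ S : Finset E, (∀ p ∈ S, ∀ q ∈ S, p ≠ q → r ≤ dist p q) →
      ∀ n ∈ S, ∑ n' ∈ S.filter (· ≠ n), dist n n' ^ (-α) ≤ C := by
  let _ : MeasurableSpace E := borel E
  have : BorelSpace E := ⟨rfl⟩
  set μ : Measure E := Measure.addHaar
  have hball : 0 < μ.real (ball 0 (r / 2)) :=
    ENNReal.toReal_pos (measure_ball_pos μ _ (half_pos hr)).ne' measure_ball_lt_top.ne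
  refine ⟨(1 / r + 3 / 2) ^ α * (∫ x, (1 + ‖x‖) ^ (-α) ∂μ) / μ.real (ball 0 (r / 2)), ?_⟩
  intro S hS n hn
  rw [le_div_iff₀ hball]
  refine sum_rpow_neg_dist_mul_measureReal_ball_le μ hr hα (fun p hp q hq hpq => ?_) fun p hp => ?_
  · exact hS p (Finset.mem_filter.mp hp).1 q (Finset.mem_filter.mp hq).1 hpq
  · exact hS n hn p (Finset.mem_filter.mp hp).1 (Finset.mem_filter.mp hp).2.symm

end

/-- For nodes in the plane with pairwise distances at least r_min > 0 and
gains G·r^{-α} with α > 2, G > 0, the total gain received at any node from all other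
nodes is bounded by a constant depending only on r_min, G, α. -/
theorem stmt4 (rmin G α : ℝ) (hrmin : 0 < rmin) (hG : 0 < G) (hα : 2 < α) :
    ∃ C : ℝ, ∀ (S : Finset (EuclideanSpace ℝ (Fin 2))),
      (∀ p ∈ S, ∀ q ∈ S, p ≠ q → rmin ≤ dist p q) →
      ∀ n ∈ S, ∑ n' ∈ S.filter (· ≠ n), G * dist n n' ^ (-α) ≤ C := by
  obtain ⟨C, hC⟩ := exists_sum_rpow_neg_dist_le (E := EuclideanSpace ℝ (Fin 2)) hrmin
    (by rwa [finrank_euclideanSpace_fin, Nat.cast_ofNat])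
  refine ⟨G * C, fun S hS n hn => ?_⟩
  rw [← Finset.mul_sum]
  exact mul_le_mul_of_nonneg_left (hC S hS n hn) hG.le
end

section
/- Consider the optimization problem: minimize Σ_{l=1}^{L} p_l/√(q_l) over q ∈ ℝ^L subject to 0 < q_l ≤ 1 for all l and Σ q_l ≤ B, where p_l > 0 and 1 ≤ B < L. The objective is convex on the feasible set, and at any optimum, there exists μ ≥ 0 such that for each l, either q_l = 1 and p_l/2 ≥ μ, or q_l < 1 and p_l·q_l^{-3/2}/2 = μ; in particular if no q_l hits the bound 1, the optimal solution is q_l = B·p_l^{2/3}/Σ_j p_j^{2/3}, with optimal value (Σ_l p_l^{2/3})^{3/2}/√B. -/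
/-!
Each term `p l / √(q l)` is convex on `(0, ∞)`: it is the convex decreasing map `y ↦ y⁻¹`
composed with the concave `√`. At a minimiser `q`, moving a little mass from a coordinate `i`
to a coordinate `j` with `q j < 1` stays feasible, so first-order optimality on the convex
feasible set shows that the marginal gain `p l q_l^{-3/2} / 2` at `j` is at most the one at `i`.
Hence all uncapped coordinates share one marginal gain `μ` and capped ones (where the gain is
`p l / 2`) have gain at least `μ`; since `B < L`, some coordinate is uncapped. Conversely, the
allocation `q_l ∝ p_l^{2/3}` exhausts the budget with constant marginal gain, so summing the
tangent-line inequalities of the convex terms shows it is optimal.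
-/

open Finset

lemma hasDerivAt_div_sqrt (c : ℝ) {x : ℝ} (hx : 0 < x) :
    HasDerivAt (fun y => c / √y) (-(c * x ^ (-(3 : ℝ) / 2) / 2)) x := by
  have h := (Real.hasDerivAt_rpow_const (p := -(1 / 2 : ℝ)) (Or.inl hx.ne')).const_mul c
  have hxeq : (fun y : ℝ => c / √y) =ᶠ[nhds x] fun y => c * y ^ (-(1 / 2 : ℝ)) := by
    filter_upwards [Ioi_mem_nhds hx] with y hy
    rw [Real.sqrt_eq_rpow, Real.rpow_neg (le_of_lt hy), div_eq_mul_inv]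
  refine (h.congr_of_eventuallyEq hxeq).congr_deriv ?_
  norm_num
  ring

lemma Real.sqrt_image_Ioi : Real.sqrt '' Set.Ioi 0 = Set.Ioi 0 := by
  ext y
  constructor
  · rintro ⟨x, hx, rfl⟩
    exact Real.sqrt_pos.2 hx
  · intro hy
    exact ⟨y ^ 2, Set.mem_Ioi.2 (pow_pos hy 2), Real.sqrt_sq (le_of_lt hy)⟩

lemma convexOn_div_sqrt {c : ℝ} (hc : 0 ≤ c) : ConvexOn ℝ (Set.Ioi 0) fun x : ℝ => c / √x := by
  have hinv : ConvexOn ℝ (Real.sqrt '' Set.Ioi 0) fun y : ℝ => y ^ (-1 : ℤ) := by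
    rw [Real.sqrt_image_Ioi]
    exact convexOn_zpow (-1)
  have hanti : AntitoneOn (fun y : ℝ => y ^ (-1 : ℤ)) (Real.sqrt '' Set.Ioi 0) := by
    rw [Real.sqrt_image_Ioi]
    intro a ha b _ hab
    simpa using inv_anti₀ ha hab
  have := (hinv.comp_concaveOn (Real.strictConcaveOn_sqrt.concaveOn.subset
    Set.Ioi_subset_Ici_self (convex_Ioi 0)) hanti).smul hc
  simpa [div_eq_mul_inv] using this

lemma ConvexOn.add_mul_sub_le_of_hasDerivAt {S : Set ℝ} {f : ℝ → ℝ} {f' x y : ℝ}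
    (hf : ConvexOn ℝ S f) (hx : x ∈ S) (hy : y ∈ S) (hd : HasDerivAt f f' x) :
    f x + f' * (y - x) ≤ f y := by
  rcases lt_trichotomy x y with hxy | rfl | hyx
  · have := hf.le_slope_of_hasDerivAt hx hy hxy hd
    rw [slope_def_field, le_div_iff₀ (sub_pos.2 hxy)] at this
    linarith
  · simp
  · have := hf.slope_le_of_hasDerivAt hy hx hyx hd
    rw [slope_def_field, div_le_iff₀ (sub_pos.2 hyx)] at this
    linarith

lemma IsMinOn.hasFDerivAt_sub_nonneg {E : Type*} [NormedAddCommGroup E] [NormedSpace ℝ E]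
    {f : E → ℝ} {f' : E →L[ℝ] ℝ} {s : Set E} {a y : E} (h : IsMinOn f s a) (hs : Convex ℝ s)
    (ha : a ∈ s) (hy : y ∈ s) (hf : HasFDerivAt f f' a) : 0 ≤ f' (y - a) :=
  h.localize.hasFDerivWithinAt_nonneg hf.hasFDerivWithinAt
    (sub_mem_posTangentConeAt_of_segment_subset (hs.segment_subset ha hy))

variable {ι : Type*} [Fintype ι]

def budgetSet (ι : Type*) [Fintype ι] (B : ℝ) : Set (ι → ℝ) :=
  {q | (∀ l, 0 < q l ∧ q l ≤ 1) ∧ ∑ l, q l ≤ B}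

lemma convex_budgetSet (B : ℝ) : Convex ℝ (budgetSet ι B) := by
  intro q hq r hr a b ha hb hab
  refine ⟨fun l => convex_Ioc (0 : ℝ) 1 (hq.1 l) (hr.1 l) ha hb hab, ?_⟩
  calc ∑ l, (a • q + b • r) l = a * ∑ l, q l + b * ∑ l, r l := by
        simp [sum_add_distrib, mul_sum]
    _ ≤ a * B + b * B := by gcongr; exacts [hq.2, hr.2]
    _ = B := by rw [← add_mul, hab, one_mul]

lemma budgetSet_subset_pi_Ioi (B : ℝ) : budgetSet ι B ⊆ Set.univ.pi fun _ => Set.Ioi 0 :=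
  fun _ hq l _ => (hq.1 l).1

lemma exists_lt_one_of_mem_budgetSet {B : ℝ} (hB : B < Fintype.card ι) {q : ι → ℝ}
    (hq : q ∈ budgetSet ι B) : ∃ l, q l < 1 := by
  by_contra! h
  have : ∑ l, q l = Fintype.card ι := by
    simp [fun l => le_antisymm (hq.1 l).2 (h l)]
  linarith [hq.2]

lemma exists_transfer_mem_budgetSet [DecidableEq ι] {B : ℝ} {q : ι → ℝ}
    (hq : q ∈ budgetSet ι B) {i j : ι} (hij : i ≠ j) (hj : q j < 1) :
    ∃ ε : ℝ, 0 < ε ∧ q + ε • (Pi.single j 1 - Pi.single i 1) ∈ budgetSet ι B := by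
  have hi : 0 < q i := (hq.1 i).1
  set ε := min (q i) (1 - q j) / 2
  have hεi : ε < q i := by have := min_le_left (q i) (1 - q j); simp only [ε]; linarith
  have hεj : ε < 1 - q j := by have := min_le_right (q i) (1 - q j); simp only [ε]; linarith
  have hε : 0 < ε := div_pos (lt_min hi (sub_pos.2 hj)) two_pos
  refine ⟨ε, hε, fun l => ?_, ?_⟩
  · rcases eq_or_ne l j with rfl | hlj
    · simp [hij]
      constructor <;> linarith [(hq.1 l).1]
    rcases eq_or_ne l i with rfl | hli
    · simp [hlj]
      constructor <;> linarith [(hq.1 l).2]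
    · simpa [hlj, hli] using hq.1 l
  · simpa [sum_add_distrib, ← mul_sum, sum_sub_distrib] using hq.2

lemma convexOn_sum_div_sqrt {p : ι → ℝ} (hp : ∀ l, 0 ≤ p l) :
    ConvexOn ℝ (Set.univ.pi fun _ => Set.Ioi 0) fun q : ι → ℝ => ∑ l, p l / √(q l) := by
  refine ⟨convex_pi fun _ _ => convex_Ioi 0, fun q hq r hr a b ha hb hab => ?_⟩
  simp only [Pi.add_apply, Pi.smul_apply, smul_eq_mul, mul_sum, ← sum_add_distrib]
  exact sum_le_sum fun l _ =>
    (convexOn_div_sqrt (hp l)).2 (hq l trivial) (hr l trivial) ha hb hab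

/-- Minus the partial derivative of `q ↦ ∑ l, p l / √(q l)` in the coordinate `l`. -/
noncomputable def marginalGain (p q : ι → ℝ) (l : ι) : ℝ :=
  p l * q l ^ (-(3 : ℝ) / 2) / 2

lemma hasFDerivAt_sum_div_sqrt (p : ι → ℝ) {q : ι → ℝ} (hq : ∀ l, 0 < q l) :
    HasFDerivAt (fun q : ι → ℝ => ∑ l, p l / √(q l))
      (∑ l, (-marginalGain p q l) • ContinuousLinearMap.proj (R := ℝ) (φ := fun _ : ι => ℝ) l)
      q :=
  HasFDerivAt.fun_sum fun l _ => (hasDerivAt_div_sqrt (p l) (hq l)).comp_hasFDerivAt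
    (f := fun q : ι → ℝ => q l) q (hasFDerivAt_apply l q)

lemma marginalGain_le_of_isMinOn {p : ι → ℝ} {B : ℝ} {q : ι → ℝ} (hq : q ∈ budgetSet ι B)
    (hmin : IsMinOn (fun q : ι → ℝ => ∑ l, p l / √(q l)) (budgetSet ι B) q)
    {i j : ι} (hij : i ≠ j) (hj : q j < 1) :
    marginalGain p q j ≤ marginalGain p q i := by
  classical
  obtain ⟨ε, hε, hmem⟩ := exists_transfer_mem_budgetSet hq hij hj
  have hdir := hmin.hasFDerivAt_sub_nonneg (convex_budgetSet B) hq hmem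
    (hasFDerivAt_sum_div_sqrt p fun l => (hq.1 l).1)
  simp only [add_sub_cancel_left, map_smul, _root_.sum_apply, smul_apply,
    ContinuousLinearMap.proj_apply, Pi.sub_apply, Pi.single_apply, smul_eq_mul, mul_sub, mul_ite,
    mul_one, mul_zero, sum_sub_distrib, sum_ite_eq', mem_univ, if_true, sub_neg_eq_add] at hdir
  linarith [(mul_nonneg_iff_of_pos_left hε).1 hdir]

lemma exists_kkt_multiplier {p : ι → ℝ} (hp : ∀ l, 0 ≤ p l) {B : ℝ} (hB : B < Fintype.card ι)
    {q : ι → ℝ} (hq : q ∈ budgetSet ι B)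
    (hmin : IsMinOn (fun q : ι → ℝ => ∑ l, p l / √(q l)) (budgetSet ι B) q) :
    ∃ μ : ℝ, 0 ≤ μ ∧ ∀ l, (q l = 1 ∧ μ ≤ p l / 2) ∨ (q l < 1 ∧ marginalGain p q l = μ) := by
  obtain ⟨k, hk⟩ := exists_lt_one_of_mem_budgetSet hB hq
  refine ⟨marginalGain p q k,
    div_nonneg (mul_nonneg (hp k) (Real.rpow_nonneg (hq.1 k).1.le _)) zero_le_two, fun l => ?_⟩
  rcases eq_or_ne l k with rfl | hlk
  · exact Or.inr ⟨hk, rfl⟩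
  rcases (hq.1 l).2.lt_or_eq with hl | hl
  · exact Or.inr ⟨hl, le_antisymm (marginalGain_le_of_isMinOn hq hmin hlk.symm hl)
      (marginalGain_le_of_isMinOn hq hmin hlk hk)⟩
  · refine Or.inl ⟨hl, ?_⟩
    simpa [marginalGain, hl] using marginalGain_le_of_isMinOn hq hmin hlk hk

lemma isMinOn_of_marginalGain_eq {p : ι → ℝ} (hp : ∀ l, 0 ≤ p l) {B μ : ℝ} (hμ : 0 ≤ μ)
    {q : ι → ℝ} (hq : ∀ l, 0 < q l) (hsum : ∑ l, q l = B)
    (hmarg : ∀ l, marginalGain p q l = μ) :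
    IsMinOn (fun q : ι → ℝ => ∑ l, p l / √(q l)) (budgetSet ι B) q := by
  intro r hr
  have htangent : ∀ l, p l / √(q l) - μ * (r l - q l) ≤ p l / √(r l) := fun l => by
    simpa [← hmarg l, marginalGain, sub_eq_add_neg, neg_mul] using
      (convexOn_div_sqrt (hp l)).add_mul_sub_le_of_hasDerivAt (hq l) (hr.1 l).1
        (hasDerivAt_div_sqrt (p l) (hq l))
  calc ∑ l, p l / √(q l) ≤ ∑ l, p l / √(q l) - μ * (∑ l, r l - ∑ l, q l) := by
        nlinarith [hr.2]
    _ = ∑ l, (p l / √(q l) - μ * (r l - q l)) := by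
        rw [sum_sub_distrib, ← mul_sum, sum_sub_distrib]
    _ ≤ ∑ l, p l / √(r l) := sum_le_sum fun l _ => htangent l

noncomputable def waterFilling (p : ι → ℝ) (B : ℝ) (l : ι) : ℝ :=
  B * p l ^ ((2 : ℝ) / 3) / ∑ j, p j ^ ((2 : ℝ) / 3)

section WaterFilling

variable {p : ι → ℝ} {B : ℝ}

local notation "S" => ∑ j, p j ^ ((2 : ℝ) / 3)

lemma sum_rpow_two_thirds_pos [Nonempty ι] (hp : ∀ l, 0 < p l) : 0 < S :=
  sum_pos (fun l _ => Real.rpow_pos_of_pos (hp l) _) univ_nonempty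

lemma waterFilling_pos [Nonempty ι] (hp : ∀ l, 0 < p l) (hB : 0 < B) (l : ι) :
    0 < waterFilling p B l :=
  div_pos (mul_pos hB (Real.rpow_pos_of_pos (hp l) _)) (sum_rpow_two_thirds_pos hp)

lemma sum_waterFilling [Nonempty ι] (hp : ∀ l, 0 < p l) : ∑ l, waterFilling p B l = B := by
  simp only [waterFilling, ← sum_div, ← mul_sum]
  exact mul_div_cancel_right₀ B (sum_rpow_two_thirds_pos hp).ne'

lemma waterFilling_rpow (hp : ∀ l, 0 ≤ p l) (hB : 0 ≤ B) (l : ι) (r : ℝ) :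
    waterFilling p B l ^ r = (B / S) ^ r * p l ^ (2 / 3 * r) := by
  have hS : 0 ≤ S := sum_nonneg fun j _ => Real.rpow_nonneg (hp j) _
  rw [waterFilling, mul_div_right_comm, Real.mul_rpow (div_nonneg hB hS)
    (Real.rpow_nonneg (hp l) _), ← Real.rpow_mul (hp l)]

lemma marginalGain_waterFilling [Nonempty ι] (hp : ∀ l, 0 < p l) (hB : 0 < B) (l : ι) :
    marginalGain p (waterFilling p B) l = (S / B) ^ ((3 : ℝ) / 2) / 2 := by
  have hBS : 0 ≤ B / S := div_nonneg hB.le (sum_rpow_two_thirds_pos hp).le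
  rw [marginalGain, waterFilling_rpow (fun l => (hp l).le) hB.le,
    show (2 : ℝ) / 3 * (-(3 : ℝ) / 2) = -1 by norm_num, Real.rpow_neg_one, neg_div,
    Real.rpow_neg hBS, ← Real.inv_rpow hBS, inv_div]
  field_simp [(hp l).ne']

lemma isMinOn_waterFilling [Nonempty ι] (hp : ∀ l, 0 < p l) (hB : 0 < B) :
    IsMinOn (fun q : ι → ℝ => ∑ l, p l / √(q l)) (budgetSet ι B) (waterFilling p B) :=
  isMinOn_of_marginalGain_eq (fun l => (hp l).le)
    (div_nonneg (Real.rpow_nonneg (div_nonneg (sum_rpow_two_thirds_pos hp).le hB.le) _)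
      zero_le_two)
    (waterFilling_pos hp hB) (sum_waterFilling hp) (marginalGain_waterFilling hp hB)

lemma sum_div_sqrt_waterFilling [Nonempty ι] (hp : ∀ l, 0 < p l) (hB : 0 < B) :
    ∑ l, p l / √(waterFilling p B l) = S ^ ((3 : ℝ) / 2) / √B := by
  have hS := sum_rpow_two_thirds_pos hp
  have hterm : ∀ l, p l / √(waterFilling p B l) = p l ^ ((2 : ℝ) / 3) / √(B / S) := fun l => by
    have hsplit : p l = p l ^ ((2 : ℝ) / 3) * p l ^ ((1 : ℝ) / 3) := by
      rw [← Real.rpow_add (hp l)]; norm_num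
    rw [Real.sqrt_eq_rpow, waterFilling_rpow (fun l => (hp l).le) hB.le, ← Real.sqrt_eq_rpow,
      show (2 : ℝ) / 3 * (1 / 2) = 1 / 3 by norm_num]
    nth_rewrite 1 [hsplit]
    exact mul_div_mul_right _ _ (Real.rpow_pos_of_pos (hp l) _).ne'
  have hS32 : S ^ ((3 : ℝ) / 2) = S * √S := by
    rw [Real.sqrt_eq_rpow, ← Real.rpow_one_add' hS.le (by norm_num)]; norm_num
  rw [sum_congr rfl fun l _ => hterm l, ← sum_div, hS32, Real.sqrt_div' _ hS.le]
  field_simp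

end WaterFilling

/-- For the problem min Σ p_l/√(q_l) s.t. 0 < q_l ≤ 1, Σ q_l ≤ B
(with p_l > 0, 1 ≤ B < L): the objective is convex on the feasible set; at any
minimizer there is a KKT multiplier μ ≥ 0 with either q_l = 1 and p_l/2 ≥ μ, or
q_l < 1 and p_l·q_l^{-3/2}/2 = μ; and if the candidate q_l = B·p_l^{2/3}/Σ p_j^{2/3}
stays strictly below 1, it is optimal with value (Σ p_l^{2/3})^{3/2}/√B. -/
theorem stmt10 (L : ℕ) (hL : 0 < L) (p : Fin L → ℝ) (hp : ∀ l, 0 < p l)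
    (B : ℝ) (hB1 : 1 ≤ B) (hBL : B < L)
    (feas : Set (Fin L → ℝ))
    (hfeas : feas = {q | (∀ l, 0 < q l ∧ q l ≤ 1) ∧ ∑ l, q l ≤ B})
    (obj : (Fin L → ℝ) → ℝ)
    (hobj : ∀ q, obj q = ∑ l, p l / Real.sqrt (q l)) :
    ConvexOn ℝ feas obj ∧
    (∀ qs ∈ feas, (∀ q ∈ feas, obj qs ≤ obj q) →
      ∃ μ : ℝ, 0 ≤ μ ∧ ∀ l,
        (qs l = 1 ∧ μ ≤ p l / 2) ∨
        (qs l < 1 ∧ p l * qs l ^ (-(3 : ℝ) / 2) / 2 = μ)) ∧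
    (∀ qh : Fin L → ℝ,
      (∀ l, qh l = B * p l ^ ((2 : ℝ) / 3) / ∑ j, p j ^ ((2 : ℝ) / 3)) →
      (∀ l, qh l < 1) →
      qh ∈ feas ∧ (∀ q ∈ feas, obj qh ≤ obj q) ∧
        obj qh = (∑ l, p l ^ ((2 : ℝ) / 3)) ^ ((3 : ℝ) / 2) / Real.sqrt B) := by
  have hfeas' : feas = budgetSet (Fin L) B := hfeas
  subst hfeas'
  obtain rfl : obj = fun q => ∑ l, p l / √(q l) := funext hobj
  have : Nonempty (Fin L) := ⟨⟨0, hL⟩⟩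
  have hB : 0 < B := zero_lt_one.trans_le hB1
  refine ⟨(convexOn_sum_div_sqrt fun l => (hp l).le).subset (budgetSet_subset_pi_Ioi B)
      (convex_budgetSet B),
    fun qs hqs hmin => exists_kkt_multiplier (fun l => (hp l).le) (by simpa using hBL) hqs hmin,
    fun qh hqh hlt => ?_⟩
  obtain rfl : qh = waterFilling p B := funext hqh
  exact ⟨⟨fun l => ⟨waterFilling_pos hp hB l, (hlt l).le⟩, (sum_waterFilling hp).le⟩,
    isMinOn_waterFilling hp hB, sum_div_sqrt_waterFilling hp hB⟩
end

section
/- For the Zipf distribution p_l = l^{-τ}/Z_τ(L) with τ > 3/2, the quantity (Σ_{l=1}^{L} p_l^{2/3})^{3/2} is bounded above by a constant independent of L; consequently, with a cache budget B = Θ(1), one has Σ_l p_l·(q_l*)^{-1/2} = Θ(1) where q_l* = min(B·p_l^{2/3}/Σ p_j^{2/3}, 1). -/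
/-! The optimal allocation `q_l ∝ p_l^{2/3}`, capped at `1`, costs at most
`(T/B)^{1/2} p_l^{2/3} + p_l` per item, where `T = Σ p_j^{2/3}`; summing gives
`Σ p_l q_l^{-1/2} ≤ B^{-1/2} T^{3/2} + 1`, while `q_l ≤ 1` gives the lower bound `1`.
For Zipf weights the normaliser `Z_τ(L)` is at least its first term `1`, so
`T ≤ Σ_l l^{-2τ/3}`, which converges exactly when `τ > 3/2`. -/

open Finset

section CacheAllocation

variable {ι : Type*}

/-- The paper's optimal cache allocation `q_l*`. -/
noncomputable def cacheAlloc (B : ℝ) (s : Finset ι) (p : ι → ℝ) (l : ι) : ℝ :=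
  min (B * p l ^ ((2 : ℝ) / 3) / ∑ j ∈ s, p j ^ ((2 : ℝ) / 3)) 1

theorem rpow_min_one_le {x : ℝ} (hx : 0 ≤ x) (r : ℝ) : min x 1 ^ r ≤ x ^ r + 1 := by
  rcases le_total x 1 with hx1 | hx1
  · rw [min_eq_left hx1]
    linarith
  · rw [min_eq_right hx1, Real.one_rpow]
    linarith [Real.rpow_nonneg hx r]

theorem mul_alloc_rpow_neg_half {a B T : ℝ} (ha : 0 < a) (hB : 0 < B) (hT : 0 < T) :
    a * (B * a ^ ((2 : ℝ) / 3) / T) ^ (-(1 : ℝ) / 2) =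
      B ^ (-(1 : ℝ) / 2) * T ^ ((1 : ℝ) / 2) * a ^ ((2 : ℝ) / 3) := by
  have ha23 : a * a ^ (-(1 : ℝ) / 3) = a ^ ((2 : ℝ) / 3) := by
    rw [← Real.rpow_one_add' ha.le (by norm_num)]
    norm_num
  rw [Real.div_rpow (by positivity) hT.le, Real.mul_rpow hB.le (by positivity),
    ← Real.rpow_mul ha.le, show (-(1 : ℝ) / 2) = -((1 : ℝ) / 2) by norm_num,
    Real.rpow_neg hT.le, div_inv_eq_mul, ← ha23]
  norm_num
  ring

variable {s : Finset ι} {p : ι → ℝ}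

theorem one_le_sum_mul_cacheAlloc_rpow (hp : ∀ l ∈ s, 0 < p l) (hsum : ∑ l ∈ s, p l = 1)
    {B : ℝ} (hB : 0 < B) :
    1 ≤ ∑ l ∈ s, p l * cacheAlloc B s p l ^ (-(1 : ℝ) / 2) := by
  refine hsum.symm.le.trans <| sum_le_sum fun l hl => le_mul_of_one_le_right (hp l hl).le ?_
  have hT : 0 < ∑ j ∈ s, p j ^ ((2 : ℝ) / 3) :=
    sum_pos (fun j hj => Real.rpow_pos_of_pos (hp j hj) _) ⟨l, hl⟩
  have hq : 0 < cacheAlloc B s p l :=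
    lt_min (div_pos (mul_pos hB (Real.rpow_pos_of_pos (hp l hl) _)) hT) one_pos
  exact Real.one_le_rpow_of_pos_of_le_one_of_nonpos hq (min_le_right _ _) (by norm_num)

theorem sum_mul_cacheAlloc_rpow_le (hp : ∀ l ∈ s, 0 < p l) (hsum : ∑ l ∈ s, p l = 1)
    {B : ℝ} (hB : 0 < B) :
    ∑ l ∈ s, p l * cacheAlloc B s p l ^ (-(1 : ℝ) / 2) ≤
      B ^ (-(1 : ℝ) / 2) * (∑ j ∈ s, p j ^ ((2 : ℝ) / 3)) ^ ((3 : ℝ) / 2) + 1 := by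
  set T := ∑ j ∈ s, p j ^ ((2 : ℝ) / 3)
  obtain ⟨l₀, hl₀⟩ : s.Nonempty := nonempty_of_sum_ne_zero (by rw [hsum]; exact one_ne_zero)
  have hT : 0 < T := sum_pos (fun j hj => Real.rpow_pos_of_pos (hp j hj) _) ⟨l₀, hl₀⟩
  have hpoint : ∀ l ∈ s, p l * cacheAlloc B s p l ^ (-(1 : ℝ) / 2) ≤
      B ^ (-(1 : ℝ) / 2) * T ^ ((1 : ℝ) / 2) * p l ^ ((2 : ℝ) / 3) + p l := by
    intro l hl
    have hpl := hp l hl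
    calc p l * cacheAlloc B s p l ^ (-(1 : ℝ) / 2)
        ≤ p l * ((B * p l ^ ((2 : ℝ) / 3) / T) ^ (-(1 : ℝ) / 2) + 1) :=
          mul_le_mul_of_nonneg_left (rpow_min_one_le (by positivity) _) hpl.le
      _ = _ := by rw [mul_add, mul_one, mul_alloc_rpow_neg_half hpl hB hT]
  calc ∑ l ∈ s, p l * cacheAlloc B s p l ^ (-(1 : ℝ) / 2)
      ≤ ∑ l ∈ s, (B ^ (-(1 : ℝ) / 2) * T ^ ((1 : ℝ) / 2) * p l ^ ((2 : ℝ) / 3) + p l) :=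
        sum_le_sum hpoint
    _ = B ^ (-(1 : ℝ) / 2) * (T ^ ((1 : ℝ) / 2) * T ^ (1 : ℝ)) + 1 := by
        rw [sum_add_distrib, ← mul_sum, hsum, Real.rpow_one, mul_assoc]
    _ = B ^ (-(1 : ℝ) / 2) * T ^ ((3 : ℝ) / 2) + 1 := by
        rw [← Real.rpow_add hT]
        norm_num

end CacheAllocation

section Zipf

theorem one_le_sum_Icc_rpow_neg {L : ℕ} (hL : 1 ≤ L) (τ : ℝ) :
    1 ≤ ∑ j ∈ Icc 1 L, (j : ℝ) ^ (-τ) := by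
  simpa using single_le_sum (f := fun j : ℕ => (j : ℝ) ^ (-τ))
    (fun j _ => Real.rpow_nonneg j.cast_nonneg _) (mem_Icc.mpr ⟨le_rfl, hL⟩)

variable {τ : ℝ} {L : ℕ} {p : ℕ → ℝ}
  (hp : ∀ l, p l = (l : ℝ) ^ (-τ) / ∑ j ∈ Icc 1 L, (j : ℝ) ^ (-τ))
include hp

theorem zipf_pos (hL : 1 ≤ L) {l : ℕ} (hl : l ∈ Icc 1 L) : 0 < p l := by
  have : (0 : ℝ) < l := by exact_mod_cast (mem_Icc.mp hl).1
  rw [hp]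
  exact div_pos (Real.rpow_pos_of_pos this _) (one_pos.trans_le (one_le_sum_Icc_rpow_neg hL τ))

theorem sum_zipf (hL : 1 ≤ L) : ∑ l ∈ Icc 1 L, p l = 1 := by
  simp_rw [hp, ← sum_div]
  exact div_self (one_pos.trans_le (one_le_sum_Icc_rpow_neg hL τ)).ne'

theorem sum_zipf_rpow_le_tsum (hL : 1 ≤ L) {r : ℝ} (hr : 0 ≤ r) (hτr : 1 < τ * r) :
    ∑ l ∈ Icc 1 L, p l ^ r ≤ ∑' n : ℕ, (n : ℝ) ^ (-(τ * r)) := by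
  have hZ := one_le_sum_Icc_rpow_neg hL τ
  have hterm : ∀ l ∈ Icc 1 L, p l ^ r ≤ (l : ℝ) ^ (-(τ * r)) := by
    intro l _
    rw [hp, Real.div_rpow (by positivity) (by positivity), ← Real.rpow_mul l.cast_nonneg,
      neg_mul]
    exact div_le_self (by positivity) (Real.one_le_rpow hZ hr)
  exact (sum_le_sum hterm).trans <| Summable.sum_le_tsum _
    (fun n _ => Real.rpow_nonneg n.cast_nonneg _) (Real.summable_nat_rpow.mpr (by linarith))

end Zipf

/-- For Zipf popularity p_l = l^{-τ}/Z_τ(L) with τ > 3/2,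
(Σ_{l=1}^{L} p_l^{2/3})^{3/2} is bounded uniformly in L; consequently, for any fixed
cache budget B ≥ 1, Σ_l p_l·(q_l*)^{-1/2} with
q_l* = min(B·p_l^{2/3}/Σ p_j^{2/3}, 1) is Θ(1) in L. -/
theorem stmt12 (τ : ℝ) (hτ : 3 / 2 < τ)
    (p : ℕ → ℕ → ℝ)
    (hp : ∀ L l, p L l = (l : ℝ) ^ (-τ) / ∑ j ∈ Finset.Icc 1 L, (j : ℝ) ^ (-τ)) :
    (∃ C : ℝ, ∀ L : ℕ, 1 ≤ L →
      (∑ l ∈ Finset.Icc 1 L, p L l ^ ((2 : ℝ) / 3)) ^ ((3 : ℝ) / 2) ≤ C) ∧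
    (∀ B : ℝ, 1 ≤ B → ∃ c C : ℝ, 0 < c ∧ ∀ L : ℕ, 1 ≤ L →
      ∀ qs : ℕ → ℝ,
        (∀ l, qs l = min (B * p L l ^ ((2 : ℝ) / 3) /
          ∑ j ∈ Finset.Icc 1 L, p L j ^ ((2 : ℝ) / 3)) 1) →
        c ≤ ∑ l ∈ Finset.Icc 1 L, p L l * qs l ^ (-(1 : ℝ) / 2) ∧
          ∑ l ∈ Finset.Icc 1 L, p L l * qs l ^ (-(1 : ℝ) / 2) ≤ C) := by
  set S := ∑' n : ℕ, (n : ℝ) ^ (-(τ * (2 / 3)))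
  have hbound : ∀ L, 1 ≤ L →
      (∑ l ∈ Icc 1 L, p L l ^ ((2 : ℝ) / 3)) ^ ((3 : ℝ) / 2) ≤ S ^ ((3 : ℝ) / 2) := fun L hL =>
    Real.rpow_le_rpow (sum_nonneg fun l hl => Real.rpow_nonneg (zipf_pos (hp L) hL hl).le _)
      (sum_zipf_rpow_le_tsum (hp L) hL (by norm_num) (by linarith)) (by norm_num)
  refine ⟨⟨_, hbound⟩, fun B hB => ⟨1, B ^ (-(1 : ℝ) / 2) * S ^ ((3 : ℝ) / 2) + 1, one_pos,
    fun L hL qs hqs => ?_⟩⟩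
  obtain rfl : qs = cacheAlloc B (Icc 1 L) (p L) := funext hqs
  have hB : 0 < B := one_pos.trans_le hB
  have hpos := fun l (hl : l ∈ Icc 1 L) => zipf_pos (hp L) hL hl
  refine ⟨one_le_sum_mul_cacheAlloc_rpow hpos (sum_zipf (hp L) hL) hB, ?_⟩
  grw [sum_mul_cacheAlloc_rpow_le hpos (sum_zipf (hp L) hL) hB, hbound L hL]
end

section
/- For the Zipf distribution p_l = l^{-τ}/Z_τ(L) with 0 ≤ τ < 1 and the uniform replication q_l = B/L (with 1 ≤ B ≤ L), one has Σ_{l=1}^{L} p_l/√(q_l) = √(L/B). More generally, for 0 ≤ τ < 1, the minimum over feasible q (0 < q_l ≤ 1, Σ q_l ≤ B) of Σ p_l/√(q_l) is Θ(√(L/B)) as L → ∞. -/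
/-!
The Zipf weights sum to one, so uniform replication gives exactly `√(L/B)`, which is also the
upper bound. For the lower bound, Bernoulli's inequality makes `(1 - τ) j ^ (-τ)` at most the
increment `j ^ (1 - τ) - (j - 1) ^ (1 - τ)`, so telescoping gives `(1 - τ) Z_τ(L) ≤ L ^ (1 - τ)`
and every Zipf weight is at least `(1 - τ) / L`. By Cauchy–Schwarz,
`∑ 1/√q_l ≥ L² / ∑ √q_l ≥ L² / √(L ∑ q_l) ≥ L √(L/B)`, whence the bound `(1 - τ) √(L/B)`.
-/

open Real Finset

lemma one_sub_mul_rpow_neg_le_rpow_sub_rpow {τ x : ℝ} (hτ0 : 0 ≤ τ) (hτ1 : τ ≤ 1) (hx : 1 ≤ x) :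
    (1 - τ) * x ^ (-τ) ≤ x ^ (1 - τ) - (x - 1) ^ (1 - τ) := by
  have hx0 : 0 < x := by linarith
  have bernoulli : ((x - 1) / x) ^ (1 - τ) ≤ 1 + (1 - τ) * -(1 / x) := by
    have h := rpow_one_add_le_one_add_mul_self (s := -(1 / x)) (p := 1 - τ)
      (by rw [neg_le_neg_iff, div_le_one hx0]; exact hx) (by linarith) (by linarith)
    rwa [show 1 + -(1 / x) = (x - 1) / x by field_simp; ring] at h
  have hsplit : (x - 1) ^ (1 - τ) = ((x - 1) / x) ^ (1 - τ) * x ^ (1 - τ) := by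
    rw [← mul_rpow (div_nonneg (by linarith) hx0.le) hx0.le, div_mul_cancel₀ _ hx0.ne']
  have hneg : x ^ (-τ) = x ^ (1 - τ) / x := by
    rw [show -τ = (1 - τ) - 1 by ring, rpow_sub_one hx0.ne']
  have := mul_le_mul_of_nonneg_right bernoulli (rpow_nonneg hx0.le (1 - τ))
  rw [hsplit, hneg]
  linarith [show (1 + (1 - τ) * -(1 / x)) * x ^ (1 - τ) = x ^ (1 - τ) - (1 - τ) * (x ^ (1 - τ) / x)
    by ring]

lemma one_sub_mul_sum_rpow_neg_le {τ : ℝ} (hτ0 : 0 ≤ τ) (hτ1 : τ ≤ 1) (n : ℕ) :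
    (1 - τ) * ∑ j ∈ Icc 1 n, (j : ℝ) ^ (-τ) ≤ (n : ℝ) ^ (1 - τ) := by
  induction n with
  | zero => simpa using rpow_nonneg le_rfl _
  | succ n ih =>
    have h := one_sub_mul_rpow_neg_le_rpow_sub_rpow hτ0 hτ1 (x := (n + 1 : ℕ))
      (by exact_mod_cast Nat.le_add_left 1 n)
    rw [Nat.cast_succ, add_sub_cancel_right] at h
    rw [sum_Icc_succ_top (Nat.le_add_left 1 n), mul_add, Nat.cast_succ]
    linarith

lemma one_sub_div_le_rpow_neg_div_sum {τ : ℝ} (hτ0 : 0 ≤ τ) (hτ1 : τ ≤ 1) {n l : ℕ}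
    (hl : l ∈ Icc 1 n) :
    (1 - τ) / n ≤ (l : ℝ) ^ (-τ) / ∑ j ∈ Icc 1 n, (j : ℝ) ^ (-τ) := by
  obtain ⟨hl1, hln⟩ := mem_Icc.1 hl
  have hn : (0 : ℝ) < n := by exact_mod_cast hl1.trans hln
  have hZ : 0 < ∑ j ∈ Icc 1 n, (j : ℝ) ^ (-τ) :=
    sum_pos (fun j hj => rpow_pos_of_pos (by exact_mod_cast (mem_Icc.1 hj).1) _) ⟨l, hl⟩
  have hmono : (n : ℝ) ^ (-τ) ≤ (l : ℝ) ^ (-τ) :=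
    rpow_le_rpow_of_nonpos (by exact_mod_cast hl1) (by exact_mod_cast hln) (by linarith)
  rw [div_le_div_iff₀ hn hZ]
  calc (1 - τ) * ∑ j ∈ Icc 1 n, (j : ℝ) ^ (-τ) ≤ (n : ℝ) ^ (1 - τ) :=
        one_sub_mul_sum_rpow_neg_le hτ0 hτ1 n
    _ = (n : ℝ) ^ (-τ) * n := by rw [sub_eq_neg_add, rpow_add_one hn.ne']
    _ ≤ (l : ℝ) ^ (-τ) * n := by gcongr

lemma card_mul_sqrt_card_div_le_sum_inv_sqrt {ι : Type*} {s : Finset ι} {q : ι → ℝ} {B : ℝ}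
    (hq : ∀ i ∈ s, 0 < q i) (hB : ∑ i ∈ s, q i ≤ B) :
    #s * √(#s / B) ≤ ∑ i ∈ s, 1 / √(q i) := by
  rcases s.eq_empty_or_nonempty with rfl | hs
  · simp
  have hr : ∀ i ∈ s, 0 < √(q i) := fun i hi => sqrt_pos.2 (hq i hi)
  have hn : (0 : ℝ) < #s := by exact_mod_cast hs.card_pos
  have hB0 : 0 < B := (sum_pos hq hs).trans_le hB
  have hsum_r : ∑ i ∈ s, √(q i) ≤ √(#s * B) := by
    apply le_sqrt_of_sq_le
    calc (∑ i ∈ s, √(q i)) ^ 2 ≤ #s * ∑ i ∈ s, √(q i) ^ 2 := sq_sum_le_card_mul_sum_sq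
      _ = #s * ∑ i ∈ s, q i := by
        rw [sum_congr rfl fun i hi => sq_sqrt (hq i hi).le]
      _ ≤ #s * B := by gcongr
  have hsedrakyan := sq_sum_div_le_sum_sq_div s (fun _ => (1 : ℝ)) hr
  simp only [sum_const, nsmul_eq_mul, mul_one, one_pow] at hsedrakyan
  calc (#s : ℝ) * √(#s / B) = #s ^ 2 / √(#s * B) := by
        rw [eq_div_iff (sqrt_pos.2 (mul_pos hn hB0)).ne', mul_assoc, ← sqrt_mul (by positivity),
          show (#s : ℝ) / B * (#s * B) = #s * #s by field_simp, sqrt_mul_self hn.le, sq]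
    _ ≤ #s ^ 2 / ∑ i ∈ s, √(q i) := by gcongr; exact sum_pos hr hs
    _ ≤ ∑ i ∈ s, 1 / √(q i) := hsedrakyan

lemma mul_card_mul_sqrt_card_div_le_sum_div_sqrt {ι : Type*} {s : Finset ι} {p q : ι → ℝ}
    {m B : ℝ} (hm : 0 ≤ m) (hp : ∀ i ∈ s, m ≤ p i) (hq : ∀ i ∈ s, 0 < q i)
    (hB : ∑ i ∈ s, q i ≤ B) :
    m * (#s * √(#s / B)) ≤ ∑ i ∈ s, p i / √(q i) :=
  calc m * (#s * √(#s / B)) ≤ m * ∑ i ∈ s, 1 / √(q i) :=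
        mul_le_mul_of_nonneg_left (card_mul_sqrt_card_div_le_sum_inv_sqrt hq hB) hm
    _ = ∑ i ∈ s, m / √(q i) := by simp_rw [mul_sum, mul_one_div]
    _ ≤ ∑ i ∈ s, p i / √(q i) :=
        sum_le_sum fun i hi => div_le_div_of_nonneg_right (hp i hi) (sqrt_nonneg _)

/-- For Zipf popularity with 0 ≤ τ < 1 and uniform replication
q_l = B/L (1 ≤ B ≤ L), Σ p_l/√(q_l) = √(L/B); moreover the minimum of Σ p_l/√(q_l)
over feasible q (0 < q_l ≤ 1, Σ q_l ≤ B) is Θ(√(L/B)) as L → ∞. -/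
theorem stmt13 (τ : ℝ) (hτ0 : 0 ≤ τ) (hτ1 : τ < 1)
    (p : ℕ → ℕ → ℝ)
    (hp : ∀ L l, p L l = (l : ℝ) ^ (-τ) / ∑ j ∈ Finset.Icc 1 L, (j : ℝ) ^ (-τ))
    (B : ℕ → ℝ) (hB : ∀ L : ℕ, 1 ≤ L → 1 ≤ B L ∧ B L ≤ L) :
    (∀ L : ℕ, 1 ≤ L →
      ∑ l ∈ Finset.Icc 1 L, p L l / Real.sqrt (B L / L) = Real.sqrt (L / B L)) ∧
    (∃ c C : ℝ, 0 < c ∧ 0 < C ∧ ∃ L₀ : ℕ, ∀ L ≥ L₀,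
      (∀ q : ℕ → ℝ, (∀ l ∈ Finset.Icc 1 L, 0 < q l ∧ q l ≤ 1) →
        (∑ l ∈ Finset.Icc 1 L, q l ≤ B L) →
        c * Real.sqrt (L / B L) ≤ ∑ l ∈ Finset.Icc 1 L, p L l / Real.sqrt (q l)) ∧
      (∃ q : ℕ → ℝ, (∀ l ∈ Finset.Icc 1 L, 0 < q l ∧ q l ≤ 1) ∧
        (∑ l ∈ Finset.Icc 1 L, q l ≤ B L) ∧
        ∑ l ∈ Finset.Icc 1 L, p L l / Real.sqrt (q l) ≤ C * Real.sqrt (L / B L))) := by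
  have hsum_p : ∀ L : ℕ, 1 ≤ L → ∑ l ∈ Icc 1 L, p L l = 1 := fun L hL => by
    simp only [hp, ← sum_div]
    refine div_self (sum_pos (fun j hj => ?_) ⟨1, mem_Icc.2 ⟨le_rfl, hL⟩⟩).ne'
    exact rpow_pos_of_pos (by exact_mod_cast (mem_Icc.1 hj).1) _
  have uniform : ∀ L : ℕ, 1 ≤ L →
      ∑ l ∈ Icc 1 L, p L l / √(B L / L) = √(L / B L) := fun L hL => by
    rw [← sum_div, hsum_p L hL, one_div, ← sqrt_inv, inv_div]
  refine ⟨uniform, 1 - τ, 1, sub_pos.2 hτ1, one_pos, 1, fun L hL => ⟨fun q hq hqB => ?_, ?_⟩⟩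
  · have hL0 : (0 : ℝ) < L := by exact_mod_cast hL
    have h := mul_card_mul_sqrt_card_div_le_sum_div_sqrt (m := (1 - τ) / L)
      (div_nonneg (sub_nonneg.2 hτ1.le) hL0.le)
      (fun l hl => (hp L l).symm ▸ one_sub_div_le_rpow_neg_div_sum hτ0 hτ1.le hl)
      (fun l hl => (hq l hl).1) hqB
    rwa [Nat.card_Icc, Nat.add_sub_cancel, ← mul_assoc, div_mul_cancel₀ _ hL0.ne'] at h
  · obtain ⟨hB1, hBL⟩ := hB L hL
    have hL0 : (0 : ℝ) < L := by exact_mod_cast hL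
    refine ⟨fun _ => B L / L, fun _ _ => ⟨by positivity, (div_le_one hL0).2 hBL⟩, ?_, ?_⟩
    · rw [sum_const, Nat.card_Icc, Nat.add_sub_cancel, nsmul_eq_mul, mul_div_cancel₀ _ hL0.ne']
    · rw [one_mul, uniform L hL]
end

section
/- Define φ(q) = ⌈(-1+√(2/q−1))/2⌉ and ψ(q) = φ(q)(1−q) − (2/3)(φ(q)³ − φ(q))·q for q ∈ (0,1]. Then ψ(q) ≥ 0 for all q ∈ (0,1], ψ(1) = 0, and ψ(q) = Θ(1/√q) as q → 0⁺. -/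
/-!
Writing `n = φ(q)`, one has `ψ(q) = n / 3 * (3 - q * (2 * n ^ 2 + 1))`. Since `n` is a ceiling,
`0 ≤ n < (1 + √(2 / q - 1)) / 2`, and `q * (2 / q - 1) = 2 - q` turns this into
`q * (2 * n ^ 2 + 1) ≤ 1 + q + √(q * (2 - q))`: at most `3` on `(0, 1]`, and at most `2` for small `q`,
so that there `n / 3 ≤ ψ(q) ≤ n`. Finally `√q * √(2 / q - 1) = √(2 - q)` pins `√q * n` between two
positive constants.
-/

open Real

noncomputable def ringDepth (q : ℝ) : ℤ := ⌈(-1 + √(2 / q - 1)) / 2⌉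

lemma ringDepth_nonneg (q : ℝ) : 0 ≤ ringDepth q := by
  have : (-1 : ℤ) < ringDepth q :=
    Int.lt_ceil.2 (by push_cast; linarith [sqrt_nonneg (2 / q - 1)])
  omega

lemma mul_sqrt_two_div_sub_one {q : ℝ} (hq : 0 ≤ q) : q * √(2 / q - 1) = √(q * (2 - q)) := by
  calc q * √(2 / q - 1) = √(q ^ 2) * √(2 / q - 1) := by rw [sqrt_sq hq]
    _ = √(q ^ 2 * (2 / q - 1)) := (sqrt_mul (sq_nonneg q) _).symm
    _ = √(q * (2 - q)) := by
      rcases hq.eq_or_lt with rfl | hq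
      · simp
      · congr 1; field_simp

lemma sqrt_mul_sqrt_two_div_sub_one {q : ℝ} (hq : 0 < q) : √q * √(2 / q - 1) = √(2 - q) := by
  rw [← sqrt_mul hq.le]; congr 1; field_simp

lemma mul_two_ringDepth_sq_add_one_le {q : ℝ} (hq : 0 < q) (hq2 : q ≤ 2) :
    q * (2 * (ringDepth q : ℝ) ^ 2 + 1) ≤ 1 + q + √(q * (2 - q)) := by
  set x := √(2 / q - 1)
  have hx2 : q * x ^ 2 = 2 - q := by
    rw [sq_sqrt (by rw [sub_nonneg, le_div_iff₀ hq]; linarith)]; field_simp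
  have hn : (ringDepth q : ℝ) ≤ (1 + x) / 2 := by
    have := Int.ceil_lt_add_one ((-1 + x) / 2); unfold ringDepth; linarith
  have hn2 : (ringDepth q : ℝ) ^ 2 ≤ ((1 + x) / 2) ^ 2 :=
    pow_le_pow_left₀ (by exact_mod_cast ringDepth_nonneg q) hn 2
  rw [← mul_sqrt_two_div_sub_one hq.le]
  nlinarith

lemma sqrt_mul_ringDepth_mem_Icc {q : ℝ} (hq : 0 < q) (hq4 : q ≤ 1 / 4) :
    √q * ringDepth q ∈ Set.Icc (1 / 4) 1 := by
  have hlo : (-1 + √(2 / q - 1)) / 2 ≤ ringDepth q := Int.le_ceil _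
  have hhi : (ringDepth q : ℝ) < (-1 + √(2 / q - 1)) / 2 + 1 := Int.ceil_lt_add_one _
  have hsx := sqrt_mul_sqrt_two_div_sub_one hq
  have hs : √q ≤ 1 / 2 := (sqrt_le_left (by norm_num)).2 (by linarith)
  have h1 : 1 ≤ √(2 - q) := one_le_sqrt.2 (by linarith)
  have h2 : √(2 - q) ≤ 3 / 2 := (sqrt_le_left (by norm_num)).2 (by linarith)
  have hs0 := sqrt_nonneg q
  constructor <;>
    nlinarith [mul_le_mul_of_nonneg_left hlo hs0, mul_le_mul_of_nonneg_left hhi.le hs0]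

/-- With φ(q) = ⌈(-1+√(2/q-1))/2⌉ and
ψ(q) = φ(q)(1-q) - (2/3)(φ(q)³ - φ(q))·q, we have ψ(q) ≥ 0 on (0,1], ψ(1) = 0, and
ψ(q) = Θ(1/√q) as q → 0⁺. -/
theorem stmt15 (φ ψ : ℝ → ℝ)
    (hφ : ∀ q : ℝ, φ q = (⌈(-1 + Real.sqrt (2 / q - 1)) / 2⌉ : ℤ))
    (hψ : ∀ q : ℝ, ψ q = φ q * (1 - q) - 2 / 3 * (φ q ^ 3 - φ q) * q) :
    (∀ q : ℝ, 0 < q → q ≤ 1 → 0 ≤ ψ q) ∧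
    ψ 1 = 0 ∧
    (∃ c C δ : ℝ, 0 < c ∧ 0 < C ∧ 0 < δ ∧ ∀ q : ℝ, 0 < q → q < δ →
      c / Real.sqrt q ≤ ψ q ∧ ψ q ≤ C / Real.sqrt q) := by
  have hψ' (q : ℝ) : ψ q = ringDepth q / 3 * (3 - q * (2 * (ringDepth q : ℝ) ^ 2 + 1)) := by
    rw [hψ, hφ, ringDepth]; ring
  have hn (q : ℝ) : (0 : ℝ) ≤ ringDepth q := by exact_mod_cast ringDepth_nonneg q
  refine ⟨fun q hq hq1 => ?_, by norm_num [hψ', ringDepth],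
    1 / 12, 1, 1 / 8, by norm_num, by norm_num, by norm_num, fun q hq hq8 => ?_⟩
  · have hload := mul_two_ringDepth_sq_add_one_le hq (by linarith)
    have hroot : √(q * (2 - q)) ≤ 1 := sqrt_le_one.2 (by nlinarith)
    rw [hψ']; nlinarith [hn q]
  · have hload := mul_two_ringDepth_sq_add_one_le hq (by linarith)
    have hroot : √(q * (2 - q)) ≤ 1 / 2 := (sqrt_le_left (by norm_num)).2 (by nlinarith)
    have hA : 0 ≤ q * (2 * (ringDepth q : ℝ) ^ 2 + 1) := by positivity
    obtain ⟨hlo, hhi⟩ := sqrt_mul_ringDepth_mem_Icc hq (by linarith)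
    have hs := sqrt_pos.2 hq
    rw [hψ', div_le_iff₀ hs, le_div_iff₀ hs]
    constructor <;> nlinarith [hn q]
end
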